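/- arXiv:2303.01215 — 5 statements merged into one kernel-verified Lean document; each statement's English description precedes it below -/
import Mathlib

section
/- Let L : ℝ^d → ℝ be differentiable with ρ-Lipschitz gradient on ℝ^d, and suppose L(θ) ≥ L* for all θ ∈ ℝ^d. Then the potential function Ψ̃(θ) := √(L(θ) − L*) is √(2ρ)-Lipschitz: |Ψ̃(θ₁) − Ψ̃(θ₂)| ≤ √(2ρ)‖θ₁ − θ₂‖ for all θ₁, θ₂ ∈ ℝ^d. -/
/-!
The descent lemma `L (x + v) ≤ L x + ⟪∇L x, v⟫ + ρ/2 ‖v‖²` makes `L` lie below a quadratic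
along every ray. Taking the gradient step `v = -ρ⁻¹ ∇L x` and using `L* ≤ L (x + v)` gives
`‖∇L x‖² ≤ 2ρ (L x - L*)`, and feeding this back into the descent lemma for an arbitrary `v`
bounds `L (x + v) - L*` by the perfect square `(√(L x - L*) + √(ρ/2) ‖v‖)²`. Hence
`√(L - L*)` is even `√(ρ/2)`-Lipschitz.
-/

open InnerProductSpace Set

section Descent

variable {E : Type*} [NormedAddCommGroup E] [NormedSpace ℝ E]
  {f : E → ℝ} {f' : E → E →L[ℝ] ℝ} {ρ : ℝ}

theorem le_add_fderiv_add_sq_of_lipschitz_fderiv (hf : ∀ x, HasFDerivAt f (f' x) x)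
    (hf' : ∀ x y, ‖f' x - f' y‖ ≤ ρ * ‖x - y‖) (x v : E) :
    f (x + v) ≤ f x + f' x v + ρ / 2 * ‖v‖ ^ 2 := by
  have hray : ∀ t : ℝ, HasDerivAt (fun s : ℝ => f (x + s • v)) (f' (x + t • v) v) t := by
    intro t
    have hline : HasDerivAt (fun s : ℝ => x + s • v) v t := by
      simpa using ((hasDerivAt_id t).smul_const v).const_add x
    exact (hf _).comp_hasDerivAt t hline
  have hquad : ∀ t : ℝ, HasDerivAt (fun s : ℝ => f x + s * f' x v + ρ / 2 * s ^ 2 * ‖v‖ ^ 2)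
      (f' x v + ρ * t * ‖v‖ ^ 2) t := by
    intro t
    have h := (((hasDerivAt_id' t).mul_const (f' x v)).const_add (f x)).add
      (((hasDerivAt_pow 2 t).const_mul (ρ / 2)).mul_const (‖v‖ ^ 2))
    exact h.congr_deriv (by simp only [one_mul, Nat.cast_ofNat, Nat.add_one_sub_one, pow_one]; ring)
  have hslope : ∀ t ∈ Ico (0 : ℝ) 1, f' (x + t • v) v ≤ f' x v + ρ * t * ‖v‖ ^ 2 := by
    intro t ht
    have hstep : ‖x + t • v - x‖ = t * ‖v‖ := by
      rw [add_sub_cancel_left, norm_smul, Real.norm_of_nonneg ht.1]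
    calc f' (x + t • v) v = f' x v + (f' (x + t • v) - f' x) v := by simp
      _ ≤ f' x v + ‖f' (x + t • v) - f' x‖ * ‖v‖ := by
          gcongr
          exact (le_abs_self _).trans ((f' (x + t • v) - f' x).le_opNorm v)
      _ ≤ f' x v + ρ * (t * ‖v‖) * ‖v‖ := by
          gcongr
          exact hstep ▸ hf' _ _
      _ = f' x v + ρ * t * ‖v‖ ^ 2 := by ring
  have hcmp := image_le_of_deriv_right_le_deriv_boundary
    (fun t _ => (hray t).continuousAt.continuousWithinAt)
    (fun t _ => (hray t).hasDerivWithinAt) (by simp)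
    (fun t _ => (hquad t).continuousAt.continuousWithinAt)
    (fun t _ => (hquad t).hasDerivWithinAt) hslope (right_mem_Icc.2 zero_le_one)
  simpa using hcmp

end Descent

section Gradient

variable {E : Type*} [NormedAddCommGroup E] [InnerProductSpace ℝ E] [CompleteSpace E]
  {f : E → ℝ} {ρ m : ℝ}

theorem norm_fderiv_sub_eq_norm_gradient_sub (x y : E) :
    ‖fderiv ℝ f x - fderiv ℝ f y‖ = ‖gradient f x - gradient f y‖ := by
  rw [gradient, gradient, ← map_sub, LinearIsometryEquiv.norm_map]

theorem le_add_inner_gradient_add_sq (hf : Differentiable ℝ f)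
    (hL : ∀ x y, ‖gradient f x - gradient f y‖ ≤ ρ * ‖x - y‖) (x v : E) :
    f (x + v) ≤ f x + inner ℝ (gradient f x) v + ρ / 2 * ‖v‖ ^ 2 := by
  have h := le_add_fderiv_add_sq_of_lipschitz_fderiv (fun x => (hf x).hasFDerivAt)
    (fun x y => (norm_fderiv_sub_eq_norm_gradient_sub x y).trans_le (hL x y)) x v
  rwa [← toDual_symm_apply] at h

theorem sq_norm_gradient_le (hρ : 0 < ρ) (hf : Differentiable ℝ f)
    (hL : ∀ x y, ‖gradient f x - gradient f y‖ ≤ ρ * ‖x - y‖) (hm : ∀ x, m ≤ f x) (x : E) :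
    ‖gradient f x‖ ^ 2 ≤ 2 * ρ * (f x - m) := by
  have hdesc := le_add_inner_gradient_add_sq hf hL x (-(ρ⁻¹ • gradient f x))
  rw [inner_neg_right, inner_smul_right, real_inner_self_eq_norm_sq, norm_neg, norm_smul,
    Real.norm_of_nonneg (inv_nonneg.2 hρ.le)] at hdesc
  have hstep : ρ⁻¹ / 2 * ‖gradient f x‖ ^ 2 ≤ f x - m := by
    have hρ' : ρ / 2 * (ρ⁻¹ * ‖gradient f x‖) ^ 2 = ρ⁻¹ / 2 * ‖gradient f x‖ ^ 2 := by
      field_simp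
    linarith [hm (x + -(ρ⁻¹ • gradient f x))]
  calc ‖gradient f x‖ ^ 2 = 2 * ρ * (ρ⁻¹ / 2 * ‖gradient f x‖ ^ 2) := by field_simp
    _ ≤ 2 * ρ * (f x - m) := by gcongr

theorem sqrt_sub_le_sqrt_sub_add (hρ : 0 < ρ) (hf : Differentiable ℝ f)
    (hL : ∀ x y, ‖gradient f x - gradient f y‖ ≤ ρ * ‖x - y‖) (hm : ∀ x, m ≤ f x) (x v : E) :
    √(f (x + v) - m) ≤ √(f x - m) + √(ρ / 2) * ‖v‖ := by
  set c := √(ρ / 2)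
  have hc : c ^ 2 = ρ / 2 := Real.sq_sqrt (by positivity)
  have hb : √(f x - m) ^ 2 = f x - m := Real.sq_sqrt (sub_nonneg.2 (hm x))
  have hgrad : ‖gradient f x‖ ≤ 2 * c * √(f x - m) := by
    refine (pow_le_pow_iff_left₀ (norm_nonneg _) (by positivity) two_ne_zero).1 ?_
    calc ‖gradient f x‖ ^ 2 ≤ 2 * ρ * (f x - m) := sq_norm_gradient_le hρ hf hL hm x
      _ = (2 * c * √(f x - m)) ^ 2 := by rw [mul_pow, mul_pow, hc, hb]; ring
  have hinner : inner ℝ (gradient f x) v ≤ 2 * c * √(f x - m) * ‖v‖ :=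
    (real_inner_le_norm _ _).trans (by gcongr)
  refine Real.sqrt_le_iff.2 ⟨by positivity, ?_⟩
  calc f (x + v) - m ≤ f x - m + inner ℝ (gradient f x) v + ρ / 2 * ‖v‖ ^ 2 := by
        linarith [le_add_inner_gradient_add_sq hf hL x v]
    _ ≤ √(f x - m) ^ 2 + 2 * c * √(f x - m) * ‖v‖ + c ^ 2 * ‖v‖ ^ 2 := by
        rw [hb, hc]; linarith
    _ = (√(f x - m) + c * ‖v‖) ^ 2 := by ring

end Gradient

/-- Lipschitzness of the potential `Ψ̃(θ) = √(L(θ) − L*)`.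
If `L : ℝ^d → ℝ` is differentiable with `ρ`-Lipschitz gradient and bounded below by `Lstar`,
then `θ ↦ √(L(θ) − Lstar)` is `√(2ρ)`-Lipschitz. -/
theorem statement1 {d : ℕ} (L : EuclideanSpace ℝ (Fin d) → ℝ) (ρ Lstar : ℝ)
    (hρpos : 0 < ρ)
    (hdiff : Differentiable ℝ L)
    (hLip : ∀ x y : EuclideanSpace ℝ (Fin d),
      ‖gradient L x - gradient L y‖ ≤ ρ * ‖x - y‖)
    (hlb : ∀ θ, Lstar ≤ L θ)
    (θ₁ θ₂ : EuclideanSpace ℝ (Fin d)) :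
    |Real.sqrt (L θ₁ - Lstar) - Real.sqrt (L θ₂ - Lstar)| ≤
      Real.sqrt (2 * ρ) * ‖θ₁ - θ₂‖ := by
  have hside : ∀ x y, √(L x - Lstar) - √(L y - Lstar) ≤ √(2 * ρ) * ‖x - y‖ := by
    intro x y
    have h := sqrt_sub_le_sqrt_sub_add hρpos hdiff hLip hlb y (x - y)
    rw [add_sub_cancel] at h
    calc √(L x - Lstar) - √(L y - Lstar) ≤ √(ρ / 2) * ‖x - y‖ := by linarith
      _ ≤ √(2 * ρ) * ‖x - y‖ := by gcongr; linarith
  exact abs_sub_le_iff.2 ⟨hside θ₁ θ₂, norm_sub_rev θ₁ θ₂ ▸ hside θ₂ θ₁⟩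
end

section
/- Let U ⊆ ℝ^d be open and convex, let L : ℝ^d → ℝ be twice continuously differentiable with ‖∇²L(θ)‖ ≤ ρ for all θ ∈ U, and suppose L satisfies the μ-PL condition on U with infimum L* := inf_{θ∈U} L(θ). Let 0 < η ≤ 1/ρ and suppose û, û' ∈ U with û' = û − η∇L(û). Then, with Ψ̃(θ) := √(L(θ) − L*), one has Ψ̃(û) − Ψ̃(û') ≥ (√(2μ)/4) η ‖∇L(û)‖. -/
/-!
A gradient that is `ρ`-Lipschitz on the convex set `U` gives the descent inequality
`L u' ≤ L u - (η/2) ‖∇L u‖²` for the step `u' = u - η ∇L u` with `ρ η ≤ 1`. Writing `a = L u - L*`,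
`b = L u' - L*`, this says `a - b ≥ (η/2) ‖∇L u‖²`, while `√a - √b = (a - b)/(√a + √b) ≥ (a - b)/(2√a)`
and the PL inequality bounds `√a` by `‖∇L u‖ / √(2μ)`.
-/

open InnerProductSpace

variable {F : Type*} [NormedAddCommGroup F] [InnerProductSpace ℝ F] [CompleteSpace F]

theorem Convex.image_le_add_inner_gradient_add_of_lipschitz {s : Set F} (hs : Convex ℝ s)
    {f : F → ℝ} {K : ℝ} (hf : ∀ z ∈ s, DifferentiableAt ℝ f z)
    {x y : F} (hx : x ∈ s) (hy : y ∈ s)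
    (hlip : ∀ z ∈ s, ‖gradient f z - gradient f x‖ ≤ K * ‖z - x‖) :
    f y ≤ f x + ⟪gradient f x, y - x⟫_ℝ + K / 2 * ‖y - x‖ ^ 2 := by
  set v := y - x
  -- `ψ` is antitone on `[0, 1]` since its derivative is `≤ 0`; `ψ 1 ≤ ψ 0` is the claim.
  set ψ : ℝ → ℝ := fun t => f (x + t • v) - t * ⟪gradient f x, v⟫_ℝ - K / 2 * ‖v‖ ^ 2 * t ^ 2
  have hseg : ∀ t ∈ Set.Icc (0 : ℝ) 1, x + t • v ∈ s := fun t ht => hs.add_smul_sub_mem hx hy ht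
  have hψ : ∀ t ∈ Set.Icc (0 : ℝ) 1, HasDerivAt ψ
      (⟪gradient f (x + t • v) - gradient f x, v⟫_ℝ - K * ‖v‖ ^ 2 * t) t := by
    intro t ht
    have hline : HasDerivAt (fun t : ℝ => x + t • v) v t := by
      simpa using ((hasDerivAt_id t).smul_const v).const_add x
    have := (((hf _ (hseg t ht)).hasFDerivAt.comp_hasDerivAt t hline).sub
      ((hasDerivAt_id t).mul_const ⟪gradient f x, v⟫_ℝ)).sub
      ((hasDerivAt_pow 2 t).const_mul (K / 2 * ‖v‖ ^ 2))
    refine this.congr_deriv ?_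
    rw [inner_sub_left, inner_gradient_left, inner_gradient_left]
    push_cast
    ring
  have hanti : AntitoneOn ψ (Set.Icc 0 1) := by
    refine antitoneOn_of_deriv_nonpos (convex_Icc 0 1)
      (fun t ht => (hψ t ht).continuousAt.continuousWithinAt)
      (fun t ht => (hψ t (interior_subset ht)).differentiableAt.differentiableWithinAt) ?_
    intro t ht
    rw [interior_Icc] at ht
    rw [(hψ t (Set.Ioo_subset_Icc_self ht)).deriv, sub_nonpos]
    calc ⟪gradient f (x + t • v) - gradient f x, v⟫_ℝ
        ≤ ‖gradient f (x + t • v) - gradient f x‖ * ‖v‖ := real_inner_le_norm _ _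
      _ ≤ K * ‖t • v‖ * ‖v‖ := by
          gcongr
          simpa using hlip _ (hseg t (Set.Ioo_subset_Icc_self ht))
      _ = K * ‖v‖ ^ 2 * t := by
          rw [norm_smul, Real.norm_of_nonneg ht.1.le]; ring
  have := hanti (Set.left_mem_Icc.2 zero_le_one) (Set.right_mem_Icc.2 zero_le_one) zero_le_one
  simp only [ψ, v, zero_smul, add_zero, one_smul, add_sub_cancel, zero_mul, sub_zero, one_mul,
    one_pow, mul_one] at this
  linarith

theorem image_sub_smul_gradient_le {s : Set F} (hs : Convex ℝ s)
    {f : F → ℝ} {K η : ℝ} (hf : ∀ z ∈ s, DifferentiableAt ℝ f z)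
    {x : F} (hx : x ∈ s) (hx' : x - η • gradient f x ∈ s)
    (hlip : ∀ z ∈ s, ‖gradient f z - gradient f x‖ ≤ K * ‖z - x‖)
    (hη : 0 ≤ η) (hKη : K * η ≤ 1) :
    f (x - η • gradient f x) ≤ f x - η / 2 * ‖gradient f x‖ ^ 2 := by
  have := hs.image_le_add_inner_gradient_add_of_lipschitz hf hx hx' hlip
  rw [sub_sub_cancel_left, inner_neg_right, real_inner_smul_right, real_inner_self_eq_norm_sq,
    norm_neg, norm_smul, Real.norm_of_nonneg hη] at this
  nlinarith [mul_le_mul_of_nonneg_left hKη (mul_nonneg hη (sq_nonneg ‖gradient f x‖))]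

theorem mul_le_sqrt_sub_sqrt {a b c η G : ℝ} (hb : 0 ≤ b) (hc : 0 ≤ c) (hη : 0 ≤ η) (hG : 0 ≤ G)
    (hdescent : b + η / 2 * G ^ 2 ≤ a) (hPL : c * a ≤ G ^ 2 / 2) :
    √(2 * c) / 4 * η * G ≤ √a - √b := by
  have hba : √b ≤ √a := Real.sqrt_le_sqrt (by nlinarith)
  have hgrad : √(2 * c) * √a ≤ G := by
    rw [← Real.sqrt_mul (by positivity), ← Real.sqrt_sq hG]
    exact Real.sqrt_le_sqrt (by linarith)
  have hsq : η / 2 * G ^ 2 ≤ (√a + √b) * (√a - √b) := by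
    rw [← sq_sub_sq, Real.sq_sqrt (hb.trans (by nlinarith)), Real.sq_sqrt hb]
    linarith
  rcases (Real.sqrt_nonneg a).eq_or_lt with ha | ha
  · have hηG : η * G = 0 := by
      rw [← ha, zero_add, zero_sub] at hsq
      exact mul_self_eq_zero.1 (by nlinarith [mul_le_mul_of_nonneg_left hsq hη, mul_self_nonneg √b])
    calc √(2 * c) / 4 * η * G = √(2 * c) / 4 * (η * G) := by ring
      _ = 0 := by rw [hηG, mul_zero]
      _ ≤ √a - √b := sub_nonneg.2 hba
  · refine le_of_mul_le_mul_left ?_ ha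
    nlinarith [mul_le_mul_of_nonneg_left hgrad (mul_nonneg hη hG),
      mul_nonneg (sub_nonneg.2 hba) (sub_nonneg.2 hba)]

theorem ContDiff.differentiable_gradient {f : F → ℝ} (hf : ContDiff ℝ 2 f) :
    Differentiable ℝ (gradient f) :=
  ((toDual ℝ F).symm.contDiff.comp (hf.fderiv_right le_rfl)).differentiable one_ne_zero

theorem statement2_general {d : ℕ} (U : Set (EuclideanSpace ℝ (Fin d)))
    (hUconv : Convex ℝ U)
    (L : EuclideanSpace ℝ (Fin d) → ℝ) (hL : ContDiff ℝ 2 L)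
    (ρ μ Lstar η : ℝ) (hρpos : 0 < ρ) (hμpos : 0 < μ)
    (hHess : ∀ θ ∈ U, ‖fderiv ℝ (gradient L) θ‖ ≤ ρ)
    (hPL : ∀ θ ∈ U, μ * (L θ - Lstar) ≤ (1 / 2) * ‖gradient L θ‖ ^ 2)
    (hinf : IsGLB (L '' U) Lstar)
    (hη0 : 0 < η) (hη : η ≤ 1 / ρ)
    (u u' : EuclideanSpace ℝ (Fin d)) (hu : u ∈ U) (hu' : u' ∈ U)
    (hstep : u' = u - η • gradient L u) :
    Real.sqrt (2 * μ) / 4 * η * ‖gradient L u‖ ≤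
      Real.sqrt (L u - Lstar) - Real.sqrt (L u' - Lstar) := by
  have hlip : ∀ θ ∈ U, ‖gradient L θ - gradient L u‖ ≤ ρ * ‖θ - u‖ := fun θ hθ =>
    hUconv.norm_image_sub_le_of_norm_fderiv_le (fun x _ => hL.differentiable_gradient x)
      hHess hu hθ
  have hρη : ρ * η ≤ 1 := by rwa [le_div_iff₀ hρpos, mul_comm] at hη
  have hdescent : L u' ≤ L u - η / 2 * ‖gradient L u‖ ^ 2 := hstep ▸
    image_sub_smul_gradient_le hUconv (fun x _ => hL.differentiable two_ne_zero x) hu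
      (hstep ▸ hu') hlip hη0.le hρη
  have hLstar : Lstar ≤ L u' := hinf.1 ⟨u', hu', rfl⟩
  exact mul_le_sqrt_sub_sqrt (sub_nonneg.2 hLstar) hμpos.le hη0.le (norm_nonneg _)
    (by linarith) (by linarith [hPL u hu])

/-- One-step potential decrease for gradient descent under μ-PL.
Under the same setting as Statement 0, with `Ψ̃(θ) = √(L(θ) − Lstar)`, one gradient step
`u' = u − η∇L(u)` satisfies `Ψ̃(u) − Ψ̃(u') ≥ (√(2μ)/4) η ‖∇L(u)‖`. -/
theorem statement2 {d : ℕ} (U : Set (EuclideanSpace ℝ (Fin d)))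
    (hUopen : IsOpen U) (hUconv : Convex ℝ U)
    (L : EuclideanSpace ℝ (Fin d) → ℝ) (hL : ContDiff ℝ 2 L)
    (ρ μ Lstar η : ℝ) (hρpos : 0 < ρ) (hμpos : 0 < μ)
    (hHess : ∀ θ ∈ U, ‖fderiv ℝ (gradient L) θ‖ ≤ ρ)
    (hPL : ∀ θ ∈ U, μ * (L θ - Lstar) ≤ (1 / 2) * ‖gradient L θ‖ ^ 2)
    (hinf : IsGLB (L '' U) Lstar)
    (hη0 : 0 < η) (hη : η ≤ 1 / ρ)
    (u u' : EuclideanSpace ℝ (Fin d)) (hu : u ∈ U) (hu' : u' ∈ U)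
    (hstep : u' = u - η • gradient L u) :
    Real.sqrt (2 * μ) / 4 * η * ‖gradient L u‖ ≤
      Real.sqrt (L u - Lstar) - Real.sqrt (L u' - Lstar) :=
  statement2_general U hUconv L hL ρ μ Lstar η hρpos hμpos hHess hPL hinf hη0 hη u u' hu hu' hstep
end

section
/- Let L : ℝ^d → ℝ be twice continuously differentiable with ‖∇²L(θ)‖ ≤ ρ₂ for all θ ∈ ℝ^d. Fix deterministic points ũ_0, …, ũ_{H−1} ∈ ℝ^d, a learning rate η > 0, constants α, σ_max > 0 with Hη ≤ α, and K workers. On a probability space, let (z_{k,τ})_{k∈{1,…,K}, 0≤τ<H} be ℝ^d-valued random vectors with ‖z_{k,τ}‖ ≤ σ_max almost surely, such that each z_{k,τ} has conditional expectation zero given the σ-algebra generated by all z_{k',τ'} with lexicographically earlier index (τ', k'). Define Z̃_{k,0} := 0 and Z̃_{k,t} := Σ_{τ=0}^{t−1} ( ∏_{l=τ+1}^{t−1} (I − η∇²L(ũ_l)) ) z_{k,τ} for 1 ≤ t ≤ H. Then for every δ ∈ (0,1), with probability at least 1 − δ, simultaneously for all k ∈ {1,…,K} and all 0 ≤ t ≤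 H: ‖Z̃_{k,t}‖ ≤ e^{αρ₂} σ_max √(2H log(2HK/δ)). -/
/-!
Pinelis' argument: for `‖ξ‖ ≤ c`, the convexity of `u ↦ cosh (λ √u)` bounds
`cosh (λ ‖x + ξ‖)` by `cosh (λ ‖x‖) cosh (λ c)` plus a term linear in `ξ`, which vanishes in
conditional expectation. Hence `E cosh (λ ‖M_t‖) ≤ cosh (λ c) ^ t ≤ exp (t λ² c² / 2)` for a sum
`M_t` of `t` increments bounded by `c` with zero conditional mean given the past, whatever the
dimension. For fixed `k` and `t`, the partial sums `s ↦ ∑_{τ<s} (∏_{l=τ+1}^{t-1} A_l) z_{k,τ}` are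
such sums with `c = e^{αρ₂} σ_max`, since the products have norm at most
`(1 + ηρ₂) ^ H ≤ e^{αρ₂}`. Markov's inequality and a union bound over the `HK` pairs `(k, t)`
finish the proof.
-/

open MeasureTheory

noncomputable section

/-- The ordered product `A_{b-1} * A_{b-2} * ⋯ * A_a` of continuous linear maps
(the identity when `b ≤ a`); applied to a vector it applies `A_a` first. -/
noncomputable def clmProd {d : ℕ}
    (A : ℕ → (EuclideanSpace ℝ (Fin d) →L[ℝ] EuclideanSpace ℝ (Fin d)))
    (a b : ℕ) : EuclideanSpace ℝ (Fin d) →L[ℝ] EuclideanSpace ℝ (Fin d) :=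
  ((List.range (b - a)).map (fun i => A (b - 1 - i))).prod

/-- The σ-algebra generated by the noise variables `z k' τ'` whose index `(τ', k')`
is lexicographically earlier than `(t, k)`. -/
noncomputable def pastSA {d K : ℕ} {Ω : Type} [MeasurableSpace Ω]
    (z : Fin K → ℕ → Ω → EuclideanSpace ℝ (Fin d)) (k : Fin K) (t : ℕ) :
    MeasurableSpace Ω :=
  ⨆ (q : ℕ × Fin K) (_ : q.1 < t ∨ (q.1 = t ∧ q.2 < k)),
    MeasurableSpace.comap (z q.2 q.1) inferInstance

open Real Set Finset

lemma cosh_mul_le_cosh_mul {l a b : ℝ} (hl : 0 ≤ l) (ha : 0 ≤ a) (hab : a ≤ b) :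
    cosh (l * a) ≤ cosh (l * b) := by
  rw [cosh_le_cosh, abs_of_nonneg (by positivity), abs_of_nonneg (by nlinarith)]
  exact mul_le_mul_of_nonneg_left hab hl

lemma inv_cosh_le_two_mul_exp_neg (x : ℝ) : (cosh x)⁻¹ ≤ 2 * exp (-x) := by
  rw [inv_le_iff_one_le_mul₀ (cosh_pos x), cosh_eq, exp_neg]
  field_simp
  nlinarith [exp_pos x]

lemma convexOn_sinh : ConvexOn ℝ (Ici 0) sinh :=
  MonotoneOn.convexOn_of_deriv (convex_Ici 0) continuous_sinh.continuousOn
    differentiable_sinh.differentiableOn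
    (by rw [Real.deriv_sinh, interior_Ici]
        exact cosh_strictMonoOn.monotoneOn.mono Ioi_subset_Ici_self)

lemma monotoneOn_sinh_div_self : MonotoneOn (fun x => sinh x / x) (Ioi 0) := by
  intro x hx y hy hxy
  simpa using convexOn_sinh.secant_mono self_mem_Ici (mem_Ici.2 hx.le) (mem_Ici.2 hy.le)
    hx.ne' hy.ne' hxy

lemma convexOn_cosh_mul_sqrt {l : ℝ} (hl : 0 ≤ l) :
    ConvexOn ℝ (Ici 0) (fun u => cosh (l * √u)) := by
  rcases hl.eq_or_lt with rfl | hl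
  · simpa using convexOn_const (1 : ℝ) (convex_Ici 0)
  have hderiv : ∀ u ∈ Ioi (0 : ℝ), HasDerivAt (fun u => cosh (l * √u))
      (l ^ 2 / 2 * (sinh (l * √u) / (l * √u))) u := by
    intro u hu
    convert ((hasDerivAt_sqrt hu.ne').const_mul l).cosh using 1
    have hsqrt := sqrt_pos.2 hu
    field_simp
  refine MonotoneOn.convexOn_of_deriv (convex_Ici 0) (by fun_prop) ?_ ?_ <;> rw [interior_Ici]
  · exact fun u hu => (hderiv u hu).differentiableAt.differentiableWithinAt
  · intro a ha b hb hab
    rw [(hderiv a ha).deriv, (hderiv b hb).deriv]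
    exact mul_le_mul_of_nonneg_left (monotoneOn_sinh_div_self (mul_pos hl (sqrt_pos.2 ha))
      (mul_pos hl (sqrt_pos.2 hb)) (by gcongr)) (by positivity)

lemma two_mul_exp_neg_sq_sqrt_log {a b x : ℝ} (ha : 0 < a) (hb : 0 < b) (hx : 1 ≤ x) :
    2 * exp (-((b * √(2 * a * log x)) ^ 2 / (2 * (a * b ^ 2)))) = 2 / x := by
  have hlog : 0 ≤ log x := log_nonneg hx
  rw [mul_pow, sq_sqrt (by positivity)]
  field_simp
  rw [exp_neg, exp_log (by linarith)]
  field_simp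

lemma norm_list_prod_le_pow {R : Type*} [SeminormedRing R] (h1 : ‖(1 : R)‖ ≤ 1) {C : ℝ}
    (hC : 0 ≤ C) : ∀ l : List R, (∀ x ∈ l, ‖x‖ ≤ C) → ‖l.prod‖ ≤ C ^ l.length
  | [], _ => by simpa using h1
  | x :: l, hl => by
    rw [List.prod_cons, List.length_cons, pow_succ']
    exact (norm_mul_le _ _).trans (mul_le_mul (hl x List.mem_cons_self)
      (norm_list_prod_le_pow h1 hC l fun y hy => hl y (List.mem_cons_of_mem x hy))
      (norm_nonneg _) hC)

section InnerProductSpace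

variable {E : Type*} [NormedAddCommGroup E] [InnerProductSpace ℝ E]

lemma cosh_mul_norm_add_le {l c : ℝ} (hl : 0 ≤ l) (hc : 0 < c) (x ξ : E) (hξ : ‖ξ‖ ≤ c) :
    cosh (l * ‖x + ξ‖) ≤ cosh (l * ‖x‖) * cosh (l * c) +
      inner ℝ ((sinh (l * ‖x‖) * sinh (l * c) / (‖x‖ * c)) • x) ξ := by
  rcases eq_or_ne x 0 with rfl | hx
  · simpa using cosh_mul_le_cosh_mul hl (norm_nonneg ξ) hξ
  set m := ‖x‖
  set s := inner ℝ x ξ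
  have hm : 0 < m := norm_pos_iff.2 hx
  obtain ⟨hs₁, hs₂⟩ := abs_le.1 ((abs_real_inner_le_norm x ξ).trans (by gcongr) : |s| ≤ m * c)
  have hnorm : ‖x + ξ‖ ≤ √(m ^ 2 + 2 * s + c ^ 2) := by
    refine le_sqrt_of_sq_le ?_
    rw [norm_add_sq_real]
    nlinarith [norm_nonneg ξ]
  -- The chord of `u ↦ cosh (l √u)` over `[(m - c) ^ 2, (m + c) ^ 2]`, at `m ^ 2 + 2 s + c ^ 2`.
  set θ := (m * c - s) / (2 * m * c)
  have hθ₀ : 0 ≤ θ := div_nonneg (by linarith) (by positivity)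
  have hθ₁ : 0 ≤ 1 - θ := by
    rw [sub_nonneg, div_le_one (by positivity)]; linarith
  have hchord := (convexOn_cosh_mul_sqrt hl).2 (mem_Ici.2 (sq_nonneg (m - c)))
    (mem_Ici.2 (sq_nonneg (m + c))) hθ₀ hθ₁ (by ring)
  have hu : θ • (m - c) ^ 2 + (1 - θ) • (m + c) ^ 2 = m ^ 2 + 2 * s + c ^ 2 := by
    simp only [θ, smul_eq_mul]; field_simp; ring
  have hcosh : cosh (l * |m - c|) = cosh (l * (m - c)) := by
    rw [← cosh_abs (l * (m - c)), abs_mul, abs_of_nonneg hl]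
  rw [hu] at hchord
  dsimp only at hchord
  rw [sqrt_sq_eq_abs, sqrt_sq (by positivity), hcosh] at hchord
  calc cosh (l * ‖x + ξ‖) ≤ cosh (l * √(m ^ 2 + 2 * s + c ^ 2)) :=
        cosh_mul_le_cosh_mul hl (norm_nonneg _) hnorm
    _ ≤ _ := hchord
    _ = _ := by
        rw [real_inner_smul_left, mul_sub, mul_add, cosh_sub, cosh_add]
        simp only [θ, s, smul_eq_mul]
        field_simp
        ring

lemma norm_sinh_div_smul_le {l c D : ℝ} (hl : 0 ≤ l) (hc : 0 < c) {x : E} (hx : ‖x‖ ≤ D) :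
    ‖(sinh (l * ‖x‖) * sinh (l * c) / (‖x‖ * c)) • x‖ ≤ sinh (l * D) * sinh (l * c) / c := by
  have hlc : 0 ≤ sinh (l * c) := sinh_nonneg_iff.2 (by positivity)
  have hlx : 0 ≤ sinh (l * ‖x‖) := sinh_nonneg_iff.2 (by positivity)
  have hlD : sinh (l * ‖x‖) ≤ sinh (l * D) := sinh_le_sinh.2 (mul_le_mul_of_nonneg_left hx hl)
  rw [norm_smul, norm_of_nonneg (by positivity)]
  rcases (norm_nonneg x).eq_or_lt with h | h
  · rw [← h, mul_zero]
    exact div_nonneg (mul_nonneg (hlx.trans hlD) hlc) hc.le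
  · calc sinh (l * ‖x‖) * sinh (l * c) / (‖x‖ * c) * ‖x‖
        = sinh (l * ‖x‖) * sinh (l * c) / c := by field_simp
      _ ≤ sinh (l * D) * sinh (l * c) / c := by gcongr

end InnerProductSpace

section Concentration

variable {E : Type*} [NormedAddCommGroup E]
variable {Ω : Type*} {m mΩ : MeasurableSpace Ω} {μ : Measure Ω}

lemma integrable_cosh_mul_norm [IsFiniteMeasure μ] {X : Ω → E} (hX : AEStronglyMeasurable X μ)
    {D : ℝ} (hXD : ∀ᵐ ω ∂μ, ‖X ω‖ ≤ D) (l : ℝ) :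
    Integrable (fun ω => cosh (l * ‖X ω‖)) μ := by
  refine .of_bound (continuous_cosh.comp_aestronglyMeasurable (hX.norm.const_mul l))
    (cosh (l * D)) ?_
  filter_upwards [hXD] with ω hω
  rw [norm_of_nonneg (cosh_pos _).le, cosh_le_cosh, abs_mul, abs_mul, abs_norm]
  exact mul_le_mul_of_nonneg_left (hω.trans (le_abs_self D)) (abs_nonneg l)

lemma ae_norm_sum_range_le {ξ : ℕ → Ω → E} {c : ℝ} {t : ℕ}
    (hξc : ∀ n < t, ∀ᵐ ω ∂μ, ‖ξ n ω‖ ≤ c) :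
    ∀ᵐ ω ∂μ, ‖∑ i ∈ range t, ξ i ω‖ ≤ t * c := by
  have hall : ∀ᵐ ω ∂μ, ∀ n ∈ range t, ‖ξ n ω‖ ≤ c :=
    (Filter.eventually_all_finset _).2 fun n hn => hξc n (mem_range.1 hn)
  filter_upwards [hall] with ω hω
  simpa using norm_sum_le_of_le (range t) hω

lemma measure_lt_norm_le_of_integral_cosh_le [IsFiniteMeasure μ] {M : Ω → E}
    (hM : AEStronglyMeasurable M μ) {D : ℝ} (hMD : ∀ᵐ ω ∂μ, ‖M ω‖ ≤ D) {v R : ℝ} (hv : 0 < v)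
    (hR : 0 ≤ R) (hmgf : ∀ l, 0 ≤ l → ∫ ω, cosh (l * ‖M ω‖) ∂μ ≤ exp (l ^ 2 * v / 2)) :
    μ {ω | R < ‖M ω‖} ≤ ENNReal.ofReal (2 * exp (-(R ^ 2 / (2 * v)))) := by
  -- `l = R / v` minimises `l ^ 2 * v / 2 - l * R`.
  set l := R / v
  have hl : 0 ≤ l := div_nonneg hR hv.le
  have hsub : {ω | R < ‖M ω‖} ⊆ {ω | cosh (l * R) ≤ cosh (l * ‖M ω‖)} := fun ω hω =>
    cosh_mul_le_cosh_mul hl hR (le_of_lt hω)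
  have hmarkov := mul_meas_ge_le_integral_of_nonneg (Filter.Eventually.of_forall
    fun ω => (cosh_pos (l * ‖M ω‖)).le) (integrable_cosh_mul_norm hM hMD l) (cosh (l * R))
  rw [ENNReal.le_ofReal_iff_toReal_le (measure_ne_top _ _) (by positivity), ← measureReal_def]
  calc μ.real {ω | R < ‖M ω‖} ≤ μ.real {ω | cosh (l * R) ≤ cosh (l * ‖M ω‖)} :=
        measureReal_mono hsub
    _ ≤ exp (l ^ 2 * v / 2) * (cosh (l * R))⁻¹ := by
        rw [← div_eq_mul_inv, le_div_iff₀ (cosh_pos _), mul_comm]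
        exact hmarkov.trans (hmgf l hl)
    _ ≤ exp (l ^ 2 * v / 2) * (2 * exp (-(l * R))) := by
        gcongr; exact inv_cosh_le_two_mul_exp_neg _
    _ = 2 * exp (-(R ^ 2 / (2 * v))) := by
        rw [mul_left_comm, ← exp_add]
        congr 2
        simp only [l]
        field_simp
        ring

lemma ofReal_one_sub_le_measure_of_compl_subset_biUnion [IsProbabilityMeasure μ] {ι : Type*}
    (s : Finset ι) {B : ι → Set Ω} {G : Set Ω} (hG : Gᶜ ⊆ ⋃ i ∈ s, B i) {ε : ℝ} (hε : 0 ≤ ε)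
    (hB : ∀ i ∈ s, μ (B i) ≤ ENNReal.ofReal ε) : ENNReal.ofReal (1 - #s * ε) ≤ μ G := by
  have hGc : μ Gᶜ ≤ ENNReal.ofReal (#s * ε) := by
    calc μ Gᶜ ≤ ∑ i ∈ s, μ (B i) := (measure_mono hG).trans (measure_biUnion_finset_le s B)
      _ ≤ ∑ _i ∈ s, ENNReal.ofReal ε := sum_le_sum hB
      _ = ENNReal.ofReal (#s * ε) := by
        rw [sum_const, nsmul_eq_mul, ENNReal.ofReal_mul (Nat.cast_nonneg _), ENNReal.ofReal_natCast]
  rw [ENNReal.ofReal_sub 1 (by positivity), ENNReal.ofReal_one, tsub_le_iff_right]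
  calc (1 : ENNReal) = μ (G ∪ Gᶜ) := by rw [union_compl_self, measure_univ]
    _ ≤ μ G + μ Gᶜ := measure_union_le G Gᶜ
    _ ≤ μ G + ENNReal.ofReal (#s * ε) := by gcongr

lemma ofReal_one_sub_le_measure_forall_norm_le [IsProbabilityMeasure μ] {K H : ℕ}
    {M : Fin K → ℕ → Ω → E} (hM : ∀ k ω, M k 0 ω = 0) {R δ : ℝ} (hR : 0 ≤ R) (hδ : 0 ≤ δ)
    (htail : ∀ k t, 1 ≤ t → t ≤ H → μ {ω | R < ‖M k t ω‖} ≤ ENNReal.ofReal (δ / (H * K))) :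
    ENNReal.ofReal (1 - δ) ≤ μ {ω | ∀ k, ∀ t ≤ H, ‖M k t ω‖ ≤ R} := by
  set s : Finset (Fin K × ℕ) := Finset.univ ×ˢ Finset.Icc 1 H
  have hbad : {ω | ∀ k, ∀ t ≤ H, ‖M k t ω‖ ≤ R}ᶜ ⊆ ⋃ p ∈ s, {ω | R < ‖M p.1 p.2 ω‖} := by
    intro ω hω
    obtain ⟨k, t, htH, hlt⟩ : ∃ k, ∃ t ≤ H, R < ‖M k t ω‖ := by simpa using hω
    have ht : t ≠ 0 := by
      rintro rfl
      exact absurd hlt (by simpa [hM] using hR)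
    refine mem_iUnion₂.2 ⟨(k, t), ?_, hlt⟩
    simp only [s, Finset.mem_product, Finset.mem_univ, Finset.mem_Icc, true_and]
    omega
  refine (ENNReal.ofReal_le_ofReal ?_).trans
    (ofReal_one_sub_le_measure_of_compl_subset_biUnion s hbad (ε := δ / (H * K)) (by positivity)
      fun p hp => ?_)
  · rcases eq_or_ne ((H : ℝ) * K) 0 with h | h
    · simp [s, h, hδ]
    · simp [s, mul_comm (K : ℝ), mul_div_cancel₀ _ h]
  · obtain ⟨ht₁, htH⟩ := Finset.mem_Icc.1 (Finset.mem_product.1 hp).2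
    exact htail p.1 p.2 ht₁ htH

variable [InnerProductSpace ℝ E] [CompleteSpace E]

lemma integral_inner_eq_zero_of_condExp_eq_zero [IsFiniteMeasure μ] (hm : m ≤ mΩ) {Y ξ : Ω → E}
    (hY : StronglyMeasurable[m] Y) {C : ℝ} (hYC : ∀ᵐ ω ∂μ, ‖Y ω‖ ≤ C) (hξ : Integrable ξ μ)
    (hcond : μ[ξ|m] =ᵐ[μ] 0) :
    ∫ ω, inner ℝ (Y ω) (ξ ω) ∂μ = 0 := by
  have hint : Integrable (fun ω => inner ℝ (Y ω) (ξ ω)) μ := by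
    refine (hξ.norm.const_mul C).mono' ((hY.mono hm).aestronglyMeasurable.inner hξ.1) ?_
    filter_upwards [hYC] with ω hω
    exact (norm_inner_le_norm _ _).trans (mul_le_mul_of_nonneg_right hω (norm_nonneg _))
  have hpull : μ[fun ω => inner ℝ (Y ω) (ξ ω)|m] =ᵐ[μ] fun _ => (0 : ℝ) :=
    (condExp_bilin_of_stronglyMeasurable_left (innerSL ℝ) hY hint hξ).trans
      (hcond.mono fun ω hω => by simp [hω])
  rw [← integral_condExp hm, integral_congr_ae hpull, integral_zero]

lemma integral_cosh_mul_norm_add_le [IsFiniteMeasure μ] (hm : m ≤ mΩ) {l c D : ℝ} (hl : 0 ≤ l)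
    (hc : 0 < c) {X ξ : Ω → E} (hX : StronglyMeasurable[m] X) (hXD : ∀ᵐ ω ∂μ, ‖X ω‖ ≤ D)
    (hξ : AEStronglyMeasurable ξ μ) (hξc : ∀ᵐ ω ∂μ, ‖ξ ω‖ ≤ c) (hcond : μ[ξ|m] =ᵐ[μ] 0) :
    ∫ ω, cosh (l * ‖X ω + ξ ω‖) ∂μ ≤ (∫ ω, cosh (l * ‖X ω‖) ∂μ) * cosh (l * c) := by
  set Y : Ω → E := fun ω => (sinh (l * ‖X ω‖) * sinh (l * c) / (‖X ω‖ * c)) • X ω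
  have hY : StronglyMeasurable[m] Y := by
    have hf : Measurable fun r : ℝ => sinh (l * r) * sinh (l * c) / (r * c) := by fun_prop
    exact (hf.comp hX.norm.measurable).stronglyMeasurable.smul hX
  have hYC : ∀ᵐ ω ∂μ, ‖Y ω‖ ≤ sinh (l * D) * sinh (l * c) / c :=
    hXD.mono fun ω hω => norm_sinh_div_smul_le hl hc hω
  have hX' : AEStronglyMeasurable X μ := (hX.mono hm).aestronglyMeasurable
  have hXξ : ∀ᵐ ω ∂μ, ‖X ω + ξ ω‖ ≤ D + c := by
    filter_upwards [hXD, hξc] with ω h₁ h₂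
    exact (norm_add_le _ _).trans (add_le_add h₁ h₂)
  have hinner : Integrable (fun ω => inner ℝ (Y ω) (ξ ω)) μ := by
    refine .of_bound ((hY.mono hm).aestronglyMeasurable.inner hξ)
      (sinh (l * D) * sinh (l * c) / c * c) ?_
    filter_upwards [hYC, hξc] with ω h₁ h₂
    exact (norm_inner_le_norm _ _).trans
      (mul_le_mul h₁ h₂ (norm_nonneg _) ((norm_nonneg _).trans h₁))
  have hcoshX := integrable_cosh_mul_norm hX' hXD l
  calc ∫ ω, cosh (l * ‖X ω + ξ ω‖) ∂μ
      ≤ ∫ ω, (cosh (l * ‖X ω‖) * cosh (l * c) + inner ℝ (Y ω) (ξ ω)) ∂μ := by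
        refine integral_mono_ae (integrable_cosh_mul_norm (hX'.add hξ) hXξ l)
          ((hcoshX.mul_const _).add hinner) ?_
        filter_upwards [hξc] with ω hω
        exact cosh_mul_norm_add_le hl hc (X ω) (ξ ω) hω
    _ = (∫ ω, cosh (l * ‖X ω‖) ∂μ) * cosh (l * c) := by
        rw [integral_add (hcoshX.mul_const _) hinner, integral_mul_const,
          integral_inner_eq_zero_of_condExp_eq_zero hm hY hYC (.of_bound hξ c hξc) hcond,
          add_zero]

variable [IsProbabilityMeasure μ] {ℱ : ℕ → MeasurableSpace Ω} {ξ : ℕ → Ω → E}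

lemma integral_cosh_mul_norm_sum_range_le (hℱ : ∀ n, ℱ n ≤ mΩ)
    (hadapt : ∀ i n, i < n → StronglyMeasurable[ℱ n] (ξ i)) {l c : ℝ} (hl : 0 ≤ l) (hc : 0 < c)
    {t : ℕ} (hξc : ∀ n < t, ∀ᵐ ω ∂μ, ‖ξ n ω‖ ≤ c) (hcond : ∀ n < t, μ[ξ n|ℱ n] =ᵐ[μ] 0) :
    ∫ ω, cosh (l * ‖∑ i ∈ range t, ξ i ω‖) ∂μ ≤ cosh (l * c) ^ t := by
  induction t with
  | zero => simp
  | succ t ih =>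
    have hX : StronglyMeasurable[ℱ t] fun ω => ∑ i ∈ range t, ξ i ω :=
      Finset.stronglyMeasurable_fun_sum _ fun i hi => hadapt i t (mem_range.1 hi)
    have hξ : AEStronglyMeasurable (ξ t) μ :=
      ((hadapt t (t + 1) t.lt_succ_self).mono (hℱ _)).aestronglyMeasurable
    simp only [sum_range_succ]
    calc _ ≤ (∫ ω, cosh (l * ‖∑ i ∈ range t, ξ i ω‖) ∂μ) * cosh (l * c) :=
          integral_cosh_mul_norm_add_le (hℱ t) hl hc hX
            (ae_norm_sum_range_le fun n hn => hξc n (by omega)) hξ (hξc t t.lt_succ_self)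
            (hcond t t.lt_succ_self)
      _ ≤ cosh (l * c) ^ t * cosh (l * c) :=
          mul_le_mul_of_nonneg_right (ih (fun n hn => hξc n (by omega))
            (fun n hn => hcond n (by omega))) (cosh_pos _).le
      _ = cosh (l * c) ^ (t + 1) := (pow_succ _ _).symm

theorem measure_lt_norm_sum_range_le (hℱ : ∀ n, ℱ n ≤ mΩ)
    (hadapt : ∀ i n, i < n → StronglyMeasurable[ℱ n] (ξ i)) {c : ℝ} (hc : 0 < c) {t n : ℕ}
    (htn : t ≤ n) (hn : 0 < n) (hξc : ∀ i < t, ∀ᵐ ω ∂μ, ‖ξ i ω‖ ≤ c)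
    (hcond : ∀ i < t, μ[ξ i|ℱ i] =ᵐ[μ] 0) {R : ℝ} (hR : 0 ≤ R) :
    μ {ω | R < ‖∑ i ∈ range t, ξ i ω‖} ≤
      ENNReal.ofReal (2 * exp (-(R ^ 2 / (2 * (n * c ^ 2))))) := by
  have hM : AEStronglyMeasurable (fun ω => ∑ i ∈ range t, ξ i ω) μ :=
    (Finset.stronglyMeasurable_fun_sum _ fun i hi =>
      ((hadapt i t (mem_range.1 hi)).mono (hℱ t))).aestronglyMeasurable
  refine measure_lt_norm_le_of_integral_cosh_le hM (ae_norm_sum_range_le hξc) (by positivity) hR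
    fun l hl => ?_
  calc ∫ ω, cosh (l * ‖∑ i ∈ range t, ξ i ω‖) ∂μ ≤ cosh (l * c) ^ t :=
        integral_cosh_mul_norm_sum_range_le hℱ hadapt hl hc hξc hcond
    _ ≤ exp ((l * c) ^ 2 / 2) ^ t := by gcongr; exact cosh_le_exp_half_sq _
    _ ≤ exp ((l * c) ^ 2 / 2) ^ n := pow_le_pow_right₀ (one_le_exp (by positivity)) htn
    _ = exp (l ^ 2 * (n * c ^ 2) / 2) := by rw [← exp_nat_mul]; ring_nf

theorem measure_lt_norm_sum_range_clm_le (hℱ : ∀ n, ℱ n ≤ mΩ) {ζ : ℕ → Ω → E}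
    (hadapt : ∀ i n, i < n → StronglyMeasurable[ℱ n] (ζ i)) (P : ℕ → E →L[ℝ] E) {C σ : ℝ}
    (hC : 0 < C) (hσ : 0 < σ) (hP : ∀ i, ‖P i‖ ≤ C) {t n : ℕ} (htn : t ≤ n) (hn : 0 < n)
    (hζσ : ∀ i < t, ∀ᵐ ω ∂μ, ‖ζ i ω‖ ≤ σ) (hcond : ∀ i < t, μ[ζ i|ℱ i] =ᵐ[μ] 0) {R : ℝ}
    (hR : 0 ≤ R) :
    μ {ω | R < ‖∑ i ∈ range t, P i (ζ i ω)‖} ≤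
      ENNReal.ofReal (2 * exp (-(R ^ 2 / (2 * (n * (C * σ) ^ 2))))) := by
  refine measure_lt_norm_sum_range_le hℱ
    (fun i n h => (P i).continuous.comp_stronglyMeasurable (hadapt i n h)) (by positivity) htn hn
    (fun i hi => ?_) (fun i hi => ?_) hR
  · filter_upwards [hζσ i hi] with ω hω
    exact (P i).le_of_opNorm_le_of_le (hP i) hω
  · have hζ : Integrable (ζ i) μ :=
      .of_bound ((hadapt i (i + 1) i.lt_succ_self).mono (hℱ _)).aestronglyMeasurable σ (hζσ i hi)
    filter_upwards [((P i).comp_condExp_comm (m := ℱ i) hζ).symm, hcond i hi] with ω h₁ h₂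
    simp only [Function.comp_apply, h₂, Pi.zero_apply, map_zero] at h₁
    exact h₁

end Concentration

lemma norm_clmProd_le {d : ℕ} {A : ℕ → EuclideanSpace ℝ (Fin d) →L[ℝ] EuclideanSpace ℝ (Fin d)}
    {C : ℝ} (hC : 0 ≤ C) (hA : ∀ l, ‖A l‖ ≤ C) (a b : ℕ) : ‖clmProd A a b‖ ≤ C ^ (b - a) := by
  simpa [clmProd] using norm_list_prod_le_pow ContinuousLinearMap.norm_id_le hC
    ((List.range (b - a)).map fun i => A (b - 1 - i)) (by simp [hA])

lemma norm_clmProd_one_sub_smul_le {d : ℕ}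
    {B : ℕ → EuclideanSpace ℝ (Fin d) →L[ℝ] EuclideanSpace ℝ (Fin d)} {η ρ α : ℝ} (hη : 0 ≤ η)
    (hB : ∀ l, ‖B l‖ ≤ ρ) {H : ℕ} (hHη : H * η ≤ α) {a b : ℕ} (hb : b ≤ H) :
    ‖clmProd (fun l => 1 - η • B l) a b‖ ≤ exp (α * ρ) := by
  have hρ : 0 ≤ ρ := (norm_nonneg _).trans (hB 0)
  have hA : ∀ l, ‖1 - η • B l‖ ≤ 1 + η * ρ := fun l =>
    (norm_sub_le _ _).trans (add_le_add ContinuousLinearMap.norm_id_le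
      (by rw [norm_smul, norm_of_nonneg hη]; exact mul_le_mul_of_nonneg_left (hB l) hη))
  have hba : ((b - a : ℕ) : ℝ) * η ≤ α :=
    (mul_le_mul_of_nonneg_right (by exact_mod_cast (b.sub_le a).trans hb) hη).trans hHη
  calc ‖clmProd (fun l => 1 - η • B l) a b‖ ≤ (1 + η * ρ) ^ (b - a) :=
        norm_clmProd_le (by positivity) hA a b
    _ ≤ exp (η * ρ) ^ (b - a) := by gcongr; linarith [add_one_le_exp (η * ρ)]
    _ = exp ((b - a : ℕ) * η * ρ) := by rw [← exp_nat_mul, mul_assoc]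
    _ ≤ exp (α * ρ) := exp_le_exp.2 (mul_le_mul_of_nonneg_right hba hρ)

lemma pastSA_le {d K : ℕ} {Ω : Type} [mΩ : MeasurableSpace Ω]
    {z : Fin K → ℕ → Ω → EuclideanSpace ℝ (Fin d)} (hz : ∀ k t, Measurable (z k t)) (k : Fin K)
    (t : ℕ) : pastSA z k t ≤ mΩ :=
  iSup₂_le fun q _ => (hz q.2 q.1).comap_le

lemma measurable_pastSA {d K : ℕ} {Ω : Type} [MeasurableSpace Ω]
    (z : Fin K → ℕ → Ω → EuclideanSpace ℝ (Fin d)) (k : Fin K) {i t : ℕ} (h : i < t) :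
    Measurable[pastSA z k t] (z k i) :=
  Measurable.of_comap_le <| le_iSup₂
    (f := fun (q : ℕ × Fin K) (_ : q.1 < t ∨ (q.1 = t ∧ q.2 < k)) =>
      MeasurableSpace.comap (z q.2 q.1) inferInstance) (i, k) (Or.inl h)

theorem statement6_general {d K : ℕ}
    (L : EuclideanSpace ℝ (Fin d) → ℝ)
    (ρ₂ : ℝ) (hHess : ∀ θ, ‖fderiv ℝ (gradient L) θ‖ ≤ ρ₂)
    (ut : ℕ → EuclideanSpace ℝ (Fin d))
    (η α σmax : ℝ) (hη : 0 < η) (hσ : 0 < σmax)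
    (H : ℕ) (hHη : (H : ℝ) * η ≤ α)
    (Ω : Type) [MeasurableSpace Ω] (μ : Measure Ω) [IsProbabilityMeasure μ]
    (z : Fin K → ℕ → Ω → EuclideanSpace ℝ (Fin d))
    (hmeas : ∀ k t, Measurable (z k t))
    (hbdd : ∀ (k : Fin K) (t : ℕ), t < H → ∀ᵐ ω ∂μ, ‖z k t ω‖ ≤ σmax)
    (hcond : ∀ (k : Fin K) (t : ℕ), t < H →
      μ[z k t | pastSA z k t] =ᵐ[μ] fun _ => (0 : EuclideanSpace ℝ (Fin d)))
    (δ : ℝ) (hδ0 : 0 < δ) :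
    ENNReal.ofReal (1 - δ) ≤
      μ {ω | ∀ k : Fin K, ∀ t ≤ H,
        ‖∑ τ ∈ Finset.range t,
            (clmProd (fun l =>
                (1 : EuclideanSpace ℝ (Fin d) →L[ℝ] EuclideanSpace ℝ (Fin d)) -
                  η • fderiv ℝ (gradient L) (ut l)) (τ + 1) t)
              (z k τ ω)‖ ≤
          Real.exp (α * ρ₂) * σmax *
            Real.sqrt (2 * H * Real.log (2 * H * K / δ))} := by
  rcases le_or_gt 1 δ with hδ1 | hδ1
  · simp [ENNReal.ofReal_of_nonpos (sub_nonpos.2 hδ1)]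
  refine ofReal_one_sub_le_measure_forall_norm_le (fun k ω => sum_range_zero _) (by positivity)
    hδ0.le fun k t ht₁ htH => ?_
  have hH : (1 : ℝ) ≤ H := by exact_mod_cast ht₁.trans htH
  have hK : (1 : ℝ) ≤ K := by exact_mod_cast k.pos
  refine (measure_lt_norm_sum_range_clm_le (pastSA_le hmeas k)
    (fun i n h => (measurable_pastSA z k h).stronglyMeasurable) _ (exp_pos _) hσ
    (fun i => norm_clmProd_one_sub_smul_le hη.le (fun l => hHess (ut l)) hHη htH) htH (by omega)
    (fun i hi => hbdd k i (by omega)) (fun i hi => hcond k i (by omega))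
    (by positivity)).trans_eq ?_
  rw [two_mul_exp_neg_sq_sqrt_log (by positivity) (by positivity)
    ((one_le_div hδ0).2 (by nlinarith))]
  field_simp

/-- Azuma-type concentration for the linearized noise accumulation
`Z̃_{k,t} = ∑_{τ<t} (∏_{l=τ+1}^{t-1}(I − η∇²L(ũ_l))) z_{k,τ}` of Local SGD:
with probability at least `1 − δ`, simultaneously for all workers `k` and all `0 ≤ t ≤ H`,
`‖Z̃_{k,t}‖ ≤ e^{αρ₂} σ_max √(2H log(2HK/δ))`. -/
theorem statement6 {d K : ℕ}
    (L : EuclideanSpace ℝ (Fin d) → ℝ) (hL : ContDiff ℝ 2 L)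
    (ρ₂ : ℝ) (hHess : ∀ θ, ‖fderiv ℝ (gradient L) θ‖ ≤ ρ₂)
    (ut : ℕ → EuclideanSpace ℝ (Fin d))
    (η α σmax : ℝ) (hη : 0 < η) (hα : 0 < α) (hσ : 0 < σmax)
    (H : ℕ) (hHη : (H : ℝ) * η ≤ α)
    (Ω : Type) [MeasurableSpace Ω] (μ : Measure Ω) [IsProbabilityMeasure μ]
    (z : Fin K → ℕ → Ω → EuclideanSpace ℝ (Fin d))
    (hmeas : ∀ k t, Measurable (z k t))
    (hbdd : ∀ (k : Fin K) (t : ℕ), t < H → ∀ᵐ ω ∂μ, ‖z k t ω‖ ≤ σmax)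
    (hcond : ∀ (k : Fin K) (t : ℕ), t < H →
      μ[z k t | pastSA z k t] =ᵐ[μ] fun _ => (0 : EuclideanSpace ℝ (Fin d)))
    (δ : ℝ) (hδ0 : 0 < δ) (hδ1 : δ < 1) :
    ENNReal.ofReal (1 - δ) ≤
      μ {ω | ∀ k : Fin K, ∀ t ≤ H,
        ‖∑ τ ∈ Finset.range t,
            (clmProd (fun l =>
                (1 : EuclideanSpace ℝ (Fin d) →L[ℝ] EuclideanSpace ℝ (Fin d)) -
                  η • fderiv ℝ (gradient L) (ut l)) (τ + 1) t)
              (z k τ ω)‖ ≤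
          Real.exp (α * ρ₂) * σmax *
            Real.sqrt (2 * H * Real.log (2 * H * K / δ))} :=
  statement6_general L ρ₂ hHess ut η α σmax hη hσ H hHη Ω μ z hmeas hbdd hcond δ hδ0
end
end

section
/- (Noise covariance equals the Hessian under label noise.) Let C ≥ 2 be an integer, p ∈ (0,1), N ≥ 1. For each i ∈ {1,…,N} let f^i = (f^i_1, …, f^i_C) : ℝ^d → ℝ^C be twice continuously differentiable with f^i_j(θ) > 0 for all j and Σ_{j=1}^C f^i_j(θ) = 1 for all θ, and fix a label y_i ∈ {1,…,C}. Define the per-sample loss ℓ_i(θ; j) := −log f^i_j(θ), let ŷ_i be a random label with P(ŷ_i = y_i) = 1 − p and P(ŷ_i = j) = p/(C−1) for each j ≠ y_i, and set L(θ) := (1/N)Σ_{i=1}^N E[ℓ_i(θ; ŷ_i)]. Suppose θ ∈ ℝ^d satisfies f^i_{y_i}(θ) = 1 − p and f^i_j(θ) = p/(C−1) for every i and every j ≠ y_i. Then ∇L(θ) = 0 and the noise covariance Σ(θ) := (1/N)Σ_{i=1}^N E[(∇_θ ℓ_i(θ; ŷ_i) − ∇L(θ))(∇_θ ℓ_i(θ;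 ŷ_i) − ∇L(θ))^⊤] equals the Hessian: Σ(θ) = ∇²L(θ). -/
open scoped RealInnerProductSpace

noncomputable section

/-- The probability that the noisy label equals `j` when the true label is `yi`:
`1 − p` for the true label and `p/(C−1)` for each of the other `C − 1` labels. -/
def labelProb {C : ℕ} (p : ℝ) (yi j : Fin C) : ℝ :=
  if j = yi then 1 - p else p / ((C : ℝ) - 1)

/-- The label-noise training loss `L(θ) = (1/N) ∑ᵢ E[ℓᵢ(θ; ŷᵢ)]`, where
`ℓᵢ(θ; j) = −log fᵢⱼ(θ)` and `ŷᵢ` has distribution `labelProb p (y i)`. -/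
noncomputable def labelNoiseLoss {d C N : ℕ}
    (f : Fin N → Fin C → EuclideanSpace ℝ (Fin d) → ℝ) (y : Fin N → Fin C) (p : ℝ)
    (θ : EuclideanSpace ℝ (Fin d)) : ℝ :=
  (N : ℝ)⁻¹ * ∑ i : Fin N, ∑ j : Fin C, labelProb p (y i) j * (-Real.log (f i j θ))

/-! At `θ` the model's predictive distribution `fᵢ(θ)` is exactly the law of the noisy label
`ŷᵢ`. Hence `E[∇ℓᵢ] = −∑ⱼ ∇fᵢⱼ(θ) = 0`, because `∑ⱼ fᵢⱼ ≡ 1`. The Hessian of `E[ℓᵢ]` is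
`∑ⱼ qⱼ (∇fᵢⱼ ∇fᵢⱼᵀ / fᵢⱼ² − ∇²fᵢⱼ / fᵢⱼ)`; with `qⱼ = fᵢⱼ(θ)` the second part becomes
`−∑ⱼ ∇²fᵢⱼ = 0`, and what remains is `E[∇ℓᵢ ∇ℓᵢᵀ]`, the covariance of the centred gradient. -/

section CrossEntropy

variable {E ι : Type*} [NormedAddCommGroup E] [NormedSpace ℝ E] [Fintype ι]

def crossEntropy (q : ι → ℝ) (g : ι → E → ℝ) (x : E) : ℝ :=
  ∑ j, q j * -Real.log (g j x)

theorem contDiff_crossEntropy {n : ℕ} (q : ι → ℝ) {g : ι → E → ℝ}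
    (hg : ∀ j, ContDiff ℝ n (g j)) (hg0 : ∀ j x, g j x ≠ 0) :
    ContDiff ℝ n (crossEntropy q g) :=
  ContDiff.sum fun j _ => contDiff_const.mul ((hg j).log (hg0 j)).neg

theorem hasFDerivAt_neg_log {g : E → ℝ} {g' : StrongDual ℝ E} {x : E}
    (hg : HasFDerivAt g g' x) (hx : g x ≠ 0) :
    HasFDerivAt (fun x => -Real.log (g x)) (-((g x)⁻¹ • g')) x :=
  (hg.log hx).fun_neg

theorem iteratedFDeriv_const_mul_apply {n : ℕ} {h : E → ℝ} {x : E} (c : ℝ)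
    (hh : ContDiffAt ℝ n h x) :
    iteratedFDeriv ℝ n (fun z => c * h z) x = c • iteratedFDeriv ℝ n h x :=
  iteratedFDeriv_const_smul_apply' (a := c) hh

theorem iteratedFDeriv_two_neg_log_apply {g : E → ℝ} (hg : ContDiff ℝ 2 g) (hg0 : ∀ x, g x ≠ 0)
    (x u v : E) :
    iteratedFDeriv ℝ 2 (fun x => -Real.log (g x)) x ![u, v] =
      fderiv ℝ (fun x => -Real.log (g x)) x u * fderiv ℝ (fun x => -Real.log (g x)) x v -
        (g x)⁻¹ * iteratedFDeriv ℝ 2 g x ![u, v] := by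
  have hd : Differentiable ℝ g := hg.differentiable two_ne_zero
  have hd2 : Differentiable ℝ (fderiv ℝ g) :=
    (hg.fderiv_right (m := 1) le_rfl).differentiable one_ne_zero
  have hD : ∀ x, fderiv ℝ (fun x => -Real.log (g x)) x = -((g x)⁻¹ • fderiv ℝ g x) := fun x =>
    (hasFDerivAt_neg_log (hd x).hasFDerivAt (hg0 x)).fderiv
  have hinv : HasFDerivAt (fun x => (g x)⁻¹) (-(g x ^ 2)⁻¹ • fderiv ℝ g x) x :=
    (hasDerivAt_inv (hg0 x)).comp_hasFDerivAt x (hd x).hasFDerivAt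
  rw [iteratedFDeriv_two_apply, iteratedFDeriv_two_apply, funext hD,
    (hinv.fun_smul (hd2 x).hasFDerivAt).fun_neg.fderiv]
  simp only [Matrix.cons_val_zero, Matrix.cons_val_one, Matrix.cons_val_fin_one, add_apply,
    neg_apply, smul_apply, ContinuousLinearMap.smulRight_apply, smul_eq_mul]
  field_simp
  ring

variable {g : ι → E → ℝ}

theorem sum_fderiv_eq_zero_of_sum_eq_one (hg : ∀ j, Differentiable ℝ (g j))
    (hsum : ∀ x, ∑ j, g j x = 1) (x : E) : ∑ j, fderiv ℝ (g j) x = 0 := by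
  rw [← fderiv_fun_sum fun j _ => (hg j x), funext hsum, fderiv_const_apply]

theorem sum_iteratedFDeriv_eq_zero_of_sum_eq_one {n : ℕ} (hn : n ≠ 0)
    (hg : ∀ j, ContDiff ℝ n (g j)) (hsum : ∀ x, ∑ j, g j x = 1) (x : E) :
    ∑ j, iteratedFDeriv ℝ n (g j) x = 0 := by
  rw [← iteratedFDeriv_fun_sum_apply fun j _ => (hg j).contDiffAt, funext hsum,
    iteratedFDeriv_const_of_ne hn, Pi.zero_apply]

theorem fderiv_crossEntropy_self (hg : ∀ j, Differentiable ℝ (g j)) (hg0 : ∀ j x, g j x ≠ 0)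
    (hsum : ∀ x, ∑ j, g j x = 1) (x : E) :
    fderiv ℝ (crossEntropy (fun j => g j x) g) x = 0 := by
  have hterm : ∀ j, HasFDerivAt (fun z => g j x * -Real.log (g j z)) (-fderiv ℝ (g j) x) x := by
    intro j
    have h := (hasFDerivAt_neg_log (hg j x).hasFDerivAt (hg0 j x)).const_mul (g j x)
    rwa [smul_neg, smul_smul, mul_inv_cancel₀ (hg0 j x), one_smul] at h
  unfold crossEntropy
  rw [(HasFDerivAt.fun_sum fun j _ => hterm j).fderiv, Finset.sum_neg_distrib,
    sum_fderiv_eq_zero_of_sum_eq_one hg hsum, neg_zero]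

theorem iteratedFDeriv_two_crossEntropy_self_apply (hg : ∀ j, ContDiff ℝ 2 (g j))
    (hg0 : ∀ j x, g j x ≠ 0) (hsum : ∀ x, ∑ j, g j x = 1) (x u v : E) :
    iteratedFDeriv ℝ 2 (crossEntropy (fun j => g j x) g) x ![u, v] =
      ∑ j, g j x * (fderiv ℝ (fun x => -Real.log (g j x)) x u *
        fderiv ℝ (fun x => -Real.log (g j x)) x v) := by
  have hterm : ∀ j, iteratedFDeriv ℝ 2 (fun z => g j x * -Real.log (g j z)) x ![u, v] =
      g j x * (fderiv ℝ (fun x => -Real.log (g j x)) x u *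
        fderiv ℝ (fun x => -Real.log (g j x)) x v) - iteratedFDeriv ℝ 2 (g j) x ![u, v] := by
    intro j
    rw [iteratedFDeriv_const_mul_apply _ ((hg j).log (hg0 j)).neg.contDiffAt, smul_apply,
      smul_eq_mul, iteratedFDeriv_two_neg_log_apply (hg j) (hg0 j), mul_sub,
      mul_inv_cancel_left₀ (hg0 j x)]
  have hsum2 := congrArg (· ![u, v])
    (sum_iteratedFDeriv_eq_zero_of_sum_eq_one two_ne_zero hg hsum x)
  simp only [sum_apply, zero_apply] at hsum2
  unfold crossEntropy
  rw [iteratedFDeriv_fun_sum_apply fun j _ =>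
      (contDiff_const.mul ((hg j).log (hg0 j)).neg).contDiffAt, sum_apply]
  simp only [hterm, Finset.sum_sub_distrib, hsum2, sub_zero]

end CrossEntropy

theorem statement16_general {d C N : ℕ}
    (p : ℝ)
    (f : Fin N → Fin C → EuclideanSpace ℝ (Fin d) → ℝ) (y : Fin N → Fin C)
    (hf : ∀ i j, ContDiff ℝ 2 (f i j))
    (hfpos : ∀ i j θ, 0 < f i j θ)
    (hfsum : ∀ i θ, ∑ j : Fin C, f i j θ = 1)
    (θ : EuclideanSpace ℝ (Fin d))
    (hθy : ∀ i, f i (y i) θ = 1 - p)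
    (hθj : ∀ i j, j ≠ y i → f i j θ = p / ((C : ℝ) - 1)) :
    gradient (labelNoiseLoss f y p) θ = 0 ∧
      ∀ u v : EuclideanSpace ℝ (Fin d),
        (N : ℝ)⁻¹ * ∑ i : Fin N, ∑ j : Fin C, labelProb p (y i) j *
            (⟪gradient (fun x => -Real.log (f i j x)) θ -
                gradient (labelNoiseLoss f y p) θ, u⟫ *
              ⟪gradient (fun x => -Real.log (f i j x)) θ -
                gradient (labelNoiseLoss f y p) θ, v⟫) =
          iteratedFDeriv ℝ 2 (labelNoiseLoss f y p) θ ![u, v] := by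
  have hf0 : ∀ i j x, f i j x ≠ 0 := fun i j x => (hfpos i j x).ne'
  have hq : ∀ i, labelProb p (y i) = fun j => f i j θ := fun i => funext fun j => by
    by_cases hj : j = y i
    · rw [labelProb, if_pos hj, hj, hθy]
    · rw [labelProb, if_neg hj, hθj i j hj]
  have hL : labelNoiseLoss f y p =
      fun x => (N : ℝ)⁻¹ * ∑ i, crossEntropy (fun j => f i j θ) (f i) x := by
    funext x
    simp only [labelNoiseLoss, crossEntropy, hq]
  have hCE : ∀ i, ContDiff ℝ 2 (crossEntropy (fun j => f i j θ) (f i)) := fun i =>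
    contDiff_crossEntropy _ (hf i) (hf0 i)
  have hgrad : gradient (labelNoiseLoss f y p) θ = 0 := by
    have hfd : ∀ i j, Differentiable ℝ (f i j) := fun i j => (hf i j).differentiable two_ne_zero
    rw [gradient, hL, fderiv_const_mul (DifferentiableAt.fun_sum fun i _ =>
        ((hCE i).differentiable two_ne_zero θ)),
      fderiv_fun_sum fun i _ => (hCE i).differentiable two_ne_zero θ]
    simp only [fderiv_crossEntropy_self (hfd _) (hf0 _) (hfsum _), Finset.sum_const_zero,
      smul_zero, map_zero]
  refine ⟨hgrad, fun u v => ?_⟩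
  simp only [hgrad, sub_zero, inner_gradient_left, hq]
  rw [hL, iteratedFDeriv_const_mul_apply _ (ContDiff.sum fun i _ => hCE i).contDiffAt,
    iteratedFDeriv_fun_sum_apply fun i _ => (hCE i).contDiffAt]
  simp only [smul_apply, sum_apply, smul_eq_mul,
    iteratedFDeriv_two_crossEntropy_self_apply (hf _) (hf0 _) (hfsum _)]

/-- Noise covariance equals the Hessian under label noise.
For a `C`-class model with positive probabilities summing to one, at any point `θ` where
the model outputs exactly match the noisy-label distribution
(`fᵢ_{yᵢ}(θ) = 1 − p`, `fᵢⱼ(θ) = p/(C−1)` for `j ≠ yᵢ`), the gradient of the label-noise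
loss vanishes and the label-noise gradient covariance
`Σ(θ) = (1/N)∑ᵢ E[(∇ℓᵢ(θ;ŷᵢ) − ∇L(θ))(∇ℓᵢ(θ;ŷᵢ) − ∇L(θ))ᵀ]` equals the Hessian `∇²L(θ)`,
both viewed as bilinear forms. -/
theorem statement16 {d C N : ℕ} (hC : 2 ≤ C) (hN : 1 ≤ N)
    (p : ℝ) (hp0 : 0 < p) (hp1 : p < 1)
    (f : Fin N → Fin C → EuclideanSpace ℝ (Fin d) → ℝ) (y : Fin N → Fin C)
    (hf : ∀ i j, ContDiff ℝ 2 (f i j))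
    (hfpos : ∀ i j θ, 0 < f i j θ)
    (hfsum : ∀ i θ, ∑ j : Fin C, f i j θ = 1)
    (θ : EuclideanSpace ℝ (Fin d))
    (hθy : ∀ i, f i (y i) θ = 1 - p)
    (hθj : ∀ i j, j ≠ y i → f i j θ = p / ((C : ℝ) - 1)) :
    gradient (labelNoiseLoss f y p) θ = 0 ∧
      ∀ u v : EuclideanSpace ℝ (Fin d),
        (N : ℝ)⁻¹ * ∑ i : Fin N, ∑ j : Fin C, labelProb p (y i) j *
            (⟪gradient (fun x => -Real.log (f i j x)) θ -
                gradient (labelNoiseLoss f y p) θ, u⟫ *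
              ⟪gradient (fun x => -Real.log (f i j x)) θ -
                gradient (labelNoiseLoss f y p) θ, v⟫) =
          iteratedFDeriv ℝ 2 (labelNoiseLoss f y p) θ ![u, v] :=
  statement16_general p f y hf hfpos hfsum θ hθy hθj
end
end

section
/- (Third derivative vanishes in tangent directions along a set of minimizers.) Let L : ℝ^d → ℝ be three times continuously differentiable. Let θ ∈ ℝ^d, let Γ ⊆ ℝ^d be a set every point of which is a local minimizer of L, and let u, v, w ∈ ℝ^d be vectors such that each of u, v, w and u + v is the velocity at time 0 of a twice continuously differentiable curve γ : (−1, 1) → ℝ^d with γ(0) = θ and γ(t) ∈ Γ for all t. Then the symmetric trilinear form given by the third derivative of L at θ satisfies ∇³L(θ)[u, v, w] = 0. -/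
/-!
The gradient `g = ∇L` vanishes on `Γ`. Differentiating `g ∘ γ = 0` twice along a curve `γ` in
`Γ` with `γ(0) = θ`, `γ'(0) = a` gives `∇g(θ) a = 0` and `∇²g(θ)[a, a] = -∇g(θ) γ''(0)`, which lies
in the range of the Hessian `∇²L(θ)`. Since the Hessian is symmetric and kills `w`, every element
of its range vanishes at `w`, so `∇³L(θ)[a, a, w] = 0` for `a = u, v, u + v`; polarization and the
symmetry of `∇³L(θ)` give `∇³L(θ)[u, v, w] = 0`.
-/

open Set Topology

noncomputable section

def tangentAt {d : ℕ} (Γ : Set (EuclideanSpace ℝ (Fin d)))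
    (θ a : EuclideanSpace ℝ (Fin d)) : Prop :=
  ∃ γ : ℝ → EuclideanSpace ℝ (Fin d), γ 0 = θ ∧
    (∀ t ∈ Set.Ioo (-1 : ℝ) 1, γ t ∈ Γ) ∧
    ContDiffOn ℝ 2 γ (Set.Ioo (-1 : ℝ) 1) ∧
    HasDerivAt γ a 0

section

variable {𝕜 E F : Type*} [NontriviallyNormedField 𝕜]
  [NormedAddCommGroup E] [NormedSpace 𝕜 E] [NormedAddCommGroup F] [NormedSpace 𝕜 F]

theorem iteratedFDeriv_three_apply (f : E → F) (x : E) (m : Fin 3 → E) :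
    iteratedFDeriv 𝕜 3 f x m = fderiv 𝕜 (fderiv 𝕜 (fderiv 𝕜 f)) x (m 0) (m 1) (m 2) := by
  rw [iteratedFDeriv_succ_apply_right, iteratedFDeriv_two_apply]
  rfl

theorem ContinuousLinearMap.apply_apply_mem_of_apply_self_mem [CharZero 𝕜]
    {T : E →L[𝕜] E →L[𝕜] F} (hT : ∀ x y, T x y = T y x) {K : Submodule 𝕜 F} {u v : E}
    (hu : T u u ∈ K) (hv : T v v ∈ K) (huv : T (u + v) (u + v) ∈ K) : T u v ∈ K := by
  have h2 : (2 : 𝕜) • T u v ∈ K := by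
    have hpolar : (2 : 𝕜) • T u v = T (u + v) (u + v) - T u u - T v v := by
      simp only [map_add, add_apply, hT v u]
      module
    rw [hpolar]
    exact K.sub_mem (K.sub_mem huv hu) hv
  exact (K.smul_mem_iff two_ne_zero).mp h2

theorem ContinuousLinearMap.apply_eq_zero_of_mem_range {H : E →L[𝕜] E →L[𝕜] F}
    (hH : ∀ x y, H x y = H y x) {w : E} (hw : H w = 0) {z : E →L[𝕜] F}
    (hz : z ∈ LinearMap.range (H : E →ₗ[𝕜] E →L[𝕜] F)) : z w = 0 := by
  obtain ⟨b, rfl⟩ := hz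
  change H b w = 0
  rw [hH, hw, zero_apply]

end

section

variable {E F : Type*} [NormedAddCommGroup E] [NormedSpace ℝ E]
  [NormedAddCommGroup F] [NormedSpace ℝ F] {g : E → F} {γ : ℝ → E} {s : Set ℝ} {t : ℝ}

theorem fderiv_apply_deriv_eq_zero_of_eqOn_zero (hg : Differentiable ℝ g) (hs : IsOpen s)
    (hγ : DifferentiableOn ℝ γ s) (hgγ : EqOn (g ∘ γ) 0 s) (ht : t ∈ s) :
    fderiv ℝ g (γ t) (deriv γ t) = 0 := by
  have hγt : HasDerivAt γ (deriv γ t) t := (hγ.differentiableAt (hs.mem_nhds ht)).hasDerivAt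
  exact ((hg (γ t)).hasFDerivAt.comp_hasDerivAt t hγt).unique
    ((hasDerivAt_const t 0).congr_of_eventuallyEq (hgγ.eventuallyEq_of_mem (hs.mem_nhds ht)))

theorem fderiv_fderiv_apply_add_fderiv_apply_eq_zero_of_eqOn_zero (hg : ContDiff ℝ 2 g)
    (hs : IsOpen s) (hγ : ContDiffOn ℝ 2 γ s) (hgγ : EqOn (g ∘ γ) 0 s) (ht : t ∈ s) :
    fderiv ℝ (fderiv ℝ g) (γ t) (deriv γ t) (deriv γ t) +
      fderiv ℝ g (γ t) (deriv (deriv γ) t) = 0 := by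
  have hγ₁ : DifferentiableOn ℝ γ s := hγ.differentiableOn two_ne_zero
  have hγ' : DifferentiableAt ℝ (deriv γ) t :=
    ((hγ.deriv_of_isOpen hs le_rfl).differentiableOn one_ne_zero).differentiableAt
      (hs.mem_nhds ht)
  have hDg : HasDerivAt (fun r ↦ fderiv ℝ g (γ r))
      (fderiv ℝ (fderiv ℝ g) (γ t) (deriv γ t)) t :=
    ((hg.fderiv_right le_rfl).differentiable one_ne_zero (γ t)).hasFDerivAt.comp_hasDerivAt t
      (hγ₁.differentiableAt (hs.mem_nhds ht)).hasDerivAt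
  have hzero : (fun r ↦ fderiv ℝ g (γ r) (deriv γ r)) =ᶠ[𝓝 t] fun _ ↦ 0 := by
    filter_upwards [hs.mem_nhds ht] with r hr
    exact fderiv_apply_deriv_eq_zero_of_eqOn_zero (hg.differentiable two_ne_zero) hs hγ₁ hgγ hr
  exact (hDg.clm_apply hγ'.hasDerivAt).unique ((hasDerivAt_const t 0).congr_of_eventuallyEq hzero)

end

namespace tangentAt

variable {F : Type*} [NormedAddCommGroup F] [NormedSpace ℝ F] {d : ℕ}
  {Γ : Set (EuclideanSpace ℝ (Fin d))} {θ a : EuclideanSpace ℝ (Fin d)}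
  {g : EuclideanSpace ℝ (Fin d) → F}

theorem fderiv_apply_eq_zero (hg : Differentiable ℝ g) (hΓ : ∀ x ∈ Γ, g x = 0)
    (ha : tangentAt Γ θ a) : fderiv ℝ g θ a = 0 := by
  obtain ⟨γ, rfl, hmem, hγ, hγ'⟩ := ha
  rw [← hγ'.deriv]
  exact fderiv_apply_deriv_eq_zero_of_eqOn_zero hg isOpen_Ioo
    (hγ.differentiableOn two_ne_zero) (fun t ht ↦ hΓ _ (hmem t ht)) (by norm_num)

theorem fderiv_fderiv_apply_mem_range (hg : ContDiff ℝ 2 g) (hΓ : ∀ x ∈ Γ, g x = 0)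
    (ha : tangentAt Γ θ a) : fderiv ℝ (fderiv ℝ g) θ a a ∈
      LinearMap.range (fderiv ℝ g θ : EuclideanSpace ℝ (Fin d) →ₗ[ℝ] F) := by
  obtain ⟨γ, rfl, hmem, hγ, hγ'⟩ := ha
  have h := fderiv_fderiv_apply_add_fderiv_apply_eq_zero_of_eqOn_zero hg isOpen_Ioo hγ
    (fun t ht ↦ hΓ _ (hmem t ht)) (t := 0) (by norm_num)
  rw [hγ'.deriv] at h
  exact ⟨-deriv (deriv γ) 0, by
    simp only [ContinuousLinearMap.coe_coe, map_neg, ← eq_neg_of_add_eq_zero_left h]⟩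

end tangentAt

/-- The third derivative vanishes in tangent directions along a set of
minimizers. If every point of `Γ` is a local minimizer of the `C³` function `L`, and each
of `u`, `v`, `w` and `u + v` is tangent to `Γ` at `θ` (velocity of a `C²` curve in `Γ`
through `θ`), then `∇³L(θ)[u, v, w] = 0`. -/
theorem statement18 {d : ℕ} (L : EuclideanSpace ℝ (Fin d) → ℝ) (hL : ContDiff ℝ 3 L)
    (Γ : Set (EuclideanSpace ℝ (Fin d))) (hΓ : ∀ x ∈ Γ, IsLocalMin L x)
    (θ u v w : EuclideanSpace ℝ (Fin d))
    (hu : tangentAt Γ θ u) (hv : tangentAt Γ θ v) (hw : tangentAt Γ θ w)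
    (huv : tangentAt Γ θ (u + v)) :
    iteratedFDeriv ℝ 3 L θ ![u, v, w] = 0 := by
  have hg : ContDiff ℝ 2 (fderiv ℝ L) := hL.fderiv_right (by norm_num)
  have hgΓ : ∀ x ∈ Γ, fderiv ℝ L x = 0 := fun x hx ↦ (hΓ x hx).fderiv_eq_zero
  have hHessian_symm : IsSymmSndFDerivAt ℝ L θ :=
    hL.contDiffAt.isSymmSndFDerivAt (by norm_num)
  have hThird_symm : IsSymmSndFDerivAt ℝ (fderiv ℝ L) θ :=
    hg.contDiffAt.isSymmSndFDerivAt (by norm_num)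
  have hmem := ContinuousLinearMap.apply_apply_mem_of_apply_self_mem hThird_symm
    (hu.fderiv_fderiv_apply_mem_range hg hgΓ) (hv.fderiv_fderiv_apply_mem_range hg hgΓ)
    (huv.fderiv_fderiv_apply_mem_range hg hgΓ)
  rw [iteratedFDeriv_three_apply]
  exact ContinuousLinearMap.apply_eq_zero_of_mem_range hHessian_symm
    (hw.fderiv_apply_eq_zero (hg.differentiable two_ne_zero) hgΓ) hmem
end
end
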